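/- Let l ≥ d+1, m ≥ 1, let A_L ∈ ℝ^{l×l} be symmetric with all entries strictly positive, and let A_N ∈ ℝ^{m×l} have all entries strictly positive. Let λ₁ be the largest eigenvalue of A_L. Then λ₁ > 0, and there exists a unit eigenvector q₁ of A_L for λ₁ with all coordinates strictly positive; for any such choice of q₁, and for any eigendecomposition A_L = Q diag(λ₁, …, λ_l) Q^⊤ with first column q₁, descending eigenvalues, and λ_{l−d+1} < 0, the first column √λ₁ q₁ of X̂_L (the matrix with columns √λ₁ q₁, √(−λ_{l−d+1}) q_{l−d+1}, …, √(−λ_l) q_l) and the first column A_N q₁/√λ₁ of X̂_N := A_N X̂_L diag(1/λ₁, −1/λ_{l−d+1}, …, −1/λ_l) are both entrywise strictly positive; equivalently, all rows of X̂_L and X̂_N lie in the positive Lorentz half-space {x ∈ ℝ^{d+1} : x₁ > 0}. -/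

import Mathlib

open Matrix Finset

/-- The Lorentz signature matrix `J = diag(1, -1, …, -1)` of size `(d+1) × (d+1)`. -/
noncomputable def lorJ (d : ℕ) : Matrix (Fin (d + 1)) (Fin (d + 1)) ℝ :=
  Matrix.diagonal (fun i => if i = 0 then (1 : ℝ) else -1)

/-- The Lorentz product `x ∘ y = x₁y₁ - (x₂y₂ + ⋯ + x_{d+1}y_{d+1})`. -/
noncomputable def lprod (d : ℕ) (x y : Fin (d + 1) → ℝ) : ℝ :=
  x 0 * y 0 - ∑ i : Fin d, x i.succ * y i.succ

/-- The hyperboloid `H_d = {x : x ∘ x = 1, x₁ > 0}`. -/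
def onHyperboloid (d : ℕ) (x : Fin (d + 1) → ℝ) : Prop :=
  lprod d x x = 1 ∧ 0 < x 0

/-- The inverse hyperbolic cosine. -/
noncomputable def arcosh (x : ℝ) : ℝ :=
  Real.log (x + Real.sqrt (x ^ 2 - 1))

/-- The hyperbolic distance with curvature `-κ`. -/
noncomputable def distH (d : ℕ) (κ : ℝ) (x y : Fin (d + 1) → ℝ) : ℝ :=
  (1 / Real.sqrt κ) * arcosh (lprod d x y)

/-- A positive Lorentz matrix: `Tᵀ J T = J` and `T₁₁ > 0`. -/
def IsPosLorentz (d : ℕ) (T : Matrix (Fin (d + 1)) (Fin (d + 1)) ℝ) : Prop :=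
  Tᵀ * lorJ d * T = lorJ d ∧ 0 < T 0 0

/-- The eigenvalue index selected for column `j` of the `L-hydra` embedding:
column `0` selects eigenvalue index `0` (the largest eigenvalue `λ₁`), and column
`j ≥ 1` selects the `j`-th of the `d` smallest eigenvalues `λ_{l-d+1}, …, λ_l`
(in 0-based indexing: `l - d - 1 + j`). -/
def colIdx {d l : ℕ} (hl : d + 1 ≤ l) (j : Fin (d + 1)) : Fin l :=
  if (j : ℕ) = 0 then ⟨0, by omega⟩ else ⟨l - d - 1 + j, by have := j.isLt; omega⟩

/-- The landmark embedding matrix `X̂_L` with columns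
`√λ₁ q₁, √(−λ_{l−d+1}) q_{l−d+1}, …, √(−λ_l) q_l`. -/
noncomputable def hatXL {d l : ℕ} (hl : d + 1 ≤ l) (Q : Matrix (Fin l) (Fin l) ℝ)
    (lam : Fin l → ℝ) : Matrix (Fin l) (Fin (d + 1)) ℝ :=
  Matrix.of fun i j =>
    (if (j : ℕ) = 0 then Real.sqrt (lam (colIdx hl j))
      else Real.sqrt (-lam (colIdx hl j))) * Q i (colIdx hl j)

/-- The diagonal matrix `diag(1/λ₁, −1/λ_{l−d+1}, …, −1/λ_l)`. -/
noncomputable def hatD {d l : ℕ} (hl : d + 1 ≤ l) (lam : Fin l → ℝ) :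
    Matrix (Fin (d + 1)) (Fin (d + 1)) ℝ :=
  Matrix.diagonal fun j =>
    if (j : ℕ) = 0 then 1 / lam (colIdx hl j) else -(1 / lam (colIdx hl j))

/-- The non-landmark embedding matrix `X̂_N = A_N X̂_L diag(1/λ₁, −1/λ_{l−d+1}, …, −1/λ_l)`. -/
noncomputable def hatXN {d l m : ℕ} (hl : d + 1 ≤ l) (A_N : Matrix (Fin m) (Fin l) ℝ)
    (Q : Matrix (Fin l) (Fin l) ℝ) (lam : Fin l → ℝ) : Matrix (Fin m) (Fin (d + 1)) ℝ :=
  A_N * hatXL hl Q lam * hatD hl lam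

/-- The squared Frobenius norm of a matrix. -/
noncomputable def frobSq {a b : ℕ} (A : Matrix (Fin a) (Fin b) ℝ) : ℝ :=
  ∑ i, ∑ j, (A i j) ^ 2

/-- The Frobenius norm of a matrix. -/
noncomputable def frob {a b : ℕ} (A : Matrix (Fin a) (Fin b) ℝ) : ℝ :=
  Real.sqrt (frobSq A)

/-! Since `μ` is the largest eigenvalue of the symmetric matrix `A_L`, the form `μ‖x‖² - xᵀA_Lx`
is positive semidefinite. For an eigenvector `v` of `μ`, positivity of `A_L` gives
`|v|ᵀA_L|v| ≥ vᵀA_Lv = μ‖v‖²`, so `|v|` is in the kernel of `μ • 1 - A_L`: it is an eigenvector,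
and `μ|v| = A_L|v| > 0` entrywise. In the decomposition `A_L = Q diag(λ) Qᵀ` the first column `q₁`
is an eigenvector for `λ₁`, hence `λ₁ = μ > 0`, and the first columns `√λ₁ q₁` of `X̂_L` and
`A_N X̂_L e₁ / λ₁` of `X̂_N` are positive. -/

section

variable {ι : Type*} [Fintype ι]

theorem posSemidef_smul_one_sub_of_eigenvalues_le [DecidableEq ι] {A : Matrix ι ι ℝ}
    (hA : A.IsHermitian) {μ : ℝ}
    (hμmax : ∀ c : ℝ, (∃ v : ι → ℝ, v ≠ 0 ∧ A *ᵥ v = c • v) → c ≤ μ) :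
    (μ • (1 : Matrix ι ι ℝ) - A).PosSemidef := by
  have hM : (μ • (1 : Matrix ι ι ℝ) - A).IsHermitian := by
    simpa [IsHermitian] using hA
  refine hM.posSemidef_iff_eigenvalues_nonneg.mpr fun i => ?_
  -- an eigenvector of `μ • 1 - A` for `ν` is an eigenvector of `A` for `μ - ν`
  have hv : A *ᵥ ⇑(hM.eigenvectorBasis i) = (μ - hM.eigenvalues i) • ⇑(hM.eigenvectorBasis i) := by
    have h := hM.mulVec_eigenvectorBasis i
    rw [sub_mulVec, smul_mulVec, one_mulVec] at h
    rw [sub_smul, ← h, sub_sub_cancel]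
  have hne : (⇑(hM.eigenvectorBasis i) : ι → ℝ) ≠ 0 := fun h0 =>
    hM.eigenvectorBasis.orthonormal.ne_zero i (by ext j; exact congrFun h0 j)
  have := hμmax _ ⟨_, hne, hv⟩
  simp only [Pi.zero_apply]
  linarith

theorem dotProduct_smul_one_sub_mulVec [DecidableEq ι] (A : Matrix ι ι ℝ) (μ : ℝ) (x : ι → ℝ) :
    x ⬝ᵥ (μ • (1 : Matrix ι ι ℝ) - A) *ᵥ x = μ * (x ⬝ᵥ x) - x ⬝ᵥ A *ᵥ x := by
  rw [sub_mulVec, dotProduct_sub, smul_mulVec, one_mulVec, dotProduct_smul, smul_eq_mul]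

theorem dotProduct_mulVec_le_of_eigenvalues_le {A : Matrix ι ι ℝ} (hA : A.IsHermitian) {μ : ℝ}
    (hμmax : ∀ c : ℝ, (∃ v : ι → ℝ, v ≠ 0 ∧ A *ᵥ v = c • v) → c ≤ μ) (x : ι → ℝ) :
    x ⬝ᵥ A *ᵥ x ≤ μ * (x ⬝ᵥ x) := by
  classical
  have h := (posSemidef_smul_one_sub_of_eigenvalues_le hA hμmax).dotProduct_mulVec_nonneg x
  rw [star_trivial, dotProduct_smul_one_sub_mulVec] at h
  linarith

/-- The quadratic form of the positive semidefinite `μ • 1 - A` vanishes only on its kernel. -/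
theorem mulVec_eq_smul_of_dotProduct_mulVec_eq {A : Matrix ι ι ℝ} (hA : A.IsHermitian) {μ : ℝ}
    (hμmax : ∀ c : ℝ, (∃ v : ι → ℝ, v ≠ 0 ∧ A *ᵥ v = c • v) → c ≤ μ) {x : ι → ℝ}
    (hx : x ⬝ᵥ A *ᵥ x = μ * (x ⬝ᵥ x)) :
    A *ᵥ x = μ • x := by
  classical
  have h : (μ • (1 : Matrix ι ι ℝ) - A) *ᵥ x = 0 := by
    rw [← (posSemidef_smul_one_sub_of_eigenvalues_le hA hμmax).dotProduct_mulVec_zero_iff,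
      star_trivial, dotProduct_smul_one_sub_mulVec, hx, sub_self]
  rw [sub_mulVec, smul_mulVec, one_mulVec, sub_eq_zero] at h
  exact h.symm

theorem dotProduct_mulVec_le_abs {A : Matrix ι ι ℝ} (hA : ∀ i j, 0 ≤ A i j) (x : ι → ℝ) :
    x ⬝ᵥ A *ᵥ x ≤ |x| ⬝ᵥ A *ᵥ |x| := by
  simp only [dotProduct, mulVec, mul_sum, Pi.abs_apply]
  refine sum_le_sum fun i _ => sum_le_sum fun j _ => ?_
  calc x i * (A i j * x j) ≤ |x i * (A i j * x j)| := le_abs_self _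
    _ = |x i| * (A i j * |x j|) := by rw [abs_mul, abs_mul, abs_of_nonneg (hA i j)]

theorem mulVec_pos_of_nonneg {A : Matrix ι ι ℝ} (hA : ∀ i j, 0 < A i j) {w : ι → ℝ}
    (hw : 0 ≤ w) (hw0 : w ≠ 0) (i : ι) : 0 < (A *ᵥ w) i := by
  obtain ⟨j, hj⟩ := Function.ne_iff.mp hw0
  exact sum_pos' (fun k _ => mul_nonneg (hA i k).le (hw k))
    ⟨j, mem_univ _, mul_pos (hA i j) ((hw j).lt_of_ne' hj)⟩

theorem exists_pos_eigenvector_of_pos {A : Matrix ι ι ℝ} (hA : A.IsHermitian)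
    (hApos : ∀ i j, 0 < A i j) {μ : ℝ} (hμeig : ∃ v : ι → ℝ, v ≠ 0 ∧ A *ᵥ v = μ • v)
    (hμmax : ∀ c : ℝ, (∃ v : ι → ℝ, v ≠ 0 ∧ A *ᵥ v = c • v) → c ≤ μ) :
    0 < μ ∧ ∃ w : ι → ℝ, A *ᵥ w = μ • w ∧ ∀ i, 0 < w i := by
  obtain ⟨v, hv0, hv⟩ := hμeig
  have hvv : |v| ⬝ᵥ |v| = v ⬝ᵥ v := by simp [dotProduct, ← sq]
  have hw : A *ᵥ |v| = μ • |v| := by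
    refine mulVec_eq_smul_of_dotProduct_mulVec_eq hA hμmax (le_antisymm
      (dotProduct_mulVec_le_of_eigenvalues_le hA hμmax _) ?_)
    calc μ * (|v| ⬝ᵥ |v|) = v ⬝ᵥ A *ᵥ v := by rw [hvv, hv, dotProduct_smul, smul_eq_mul]
      _ ≤ |v| ⬝ᵥ A *ᵥ |v| := dotProduct_mulVec_le_abs (fun i j => (hApos i j).le) v
  have hAw := mulVec_pos_of_nonneg hApos (abs_nonneg v) (by simpa using hv0)
  simp only [hw, Pi.smul_apply, smul_eq_mul] at hAw
  obtain ⟨j, -⟩ := Function.ne_iff.mp hv0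
  have hμ : 0 < μ := pos_of_mul_pos_left (hAw j) (abs_nonneg (v j))
  exact ⟨hμ, |v|, hw, fun i => pos_of_mul_pos_right (hAw i) hμ.le⟩

theorem exists_unit_pos_eigenvector_of_pos {A : Matrix ι ι ℝ} (hA : A.IsHermitian)
    (hApos : ∀ i j, 0 < A i j) {μ : ℝ} (hμeig : ∃ v : ι → ℝ, v ≠ 0 ∧ A *ᵥ v = μ • v)
    (hμmax : ∀ c : ℝ, (∃ v : ι → ℝ, v ≠ 0 ∧ A *ᵥ v = c • v) → c ≤ μ) :
    0 < μ ∧ ∃ q : ι → ℝ, ∑ i, q i ^ 2 = 1 ∧ A *ᵥ q = μ • q ∧ ∀ i, 0 < q i := by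
  have : Nonempty ι := by
    obtain ⟨v, hv0, -⟩ := hμeig
    exact (Function.ne_iff.mp hv0).nonempty
  obtain ⟨hμ, w, hw, hwpos⟩ := exists_pos_eigenvector_of_pos hA hApos hμeig hμmax
  have hS : 0 < ∑ i, w i ^ 2 := sum_pos (fun i _ => pow_pos (hwpos i) 2) univ_nonempty
  set c := (√(∑ i, w i ^ 2))⁻¹
  have hc : 0 < c := by positivity
  refine ⟨hμ, c • w, ?_, by rw [mulVec_smul, hw, smul_comm], fun i => mul_pos hc (hwpos i)⟩
  simp only [Pi.smul_apply, smul_eq_mul, mul_pow, ← mul_sum, c, inv_pow,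
    Real.sq_sqrt hS.le, inv_mul_cancel₀ hS.ne']

theorem mulVec_col_of_eq_mul_diagonal_mul_transpose {A Q : Matrix ι ι ℝ} [DecidableEq ι]
    {lam : ι → ℝ} (hQ : Qᵀ * Q = 1) (hA : A = Q * diagonal lam * Qᵀ) (k : ι) :
    A *ᵥ (fun i => Q i k) = lam k • fun i => Q i k := by
  have hAQ : A * Q = Q * diagonal lam := by
    rw [hA, Matrix.mul_assoc, hQ, Matrix.mul_one]
  ext i
  have h := congrFun (congrFun hAQ i) k
  rw [mul_diagonal] at h
  simp only [mulVec, dotProduct, Pi.smul_apply, smul_eq_mul, ← mul_apply, h, mul_comm]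

end

theorem colIdx_zero {d l : ℕ} (hl : d + 1 ≤ l) : colIdx hl 0 = ⟨0, by omega⟩ := by
  simp [colIdx]

theorem hatXL_apply_zero {d l : ℕ} (hl : d + 1 ≤ l) (Q : Matrix (Fin l) (Fin l) ℝ)
    (lam : Fin l → ℝ) (i : Fin l) :
    hatXL hl Q lam i 0 = √(lam ⟨0, by omega⟩) * Q i ⟨0, by omega⟩ := by
  simp [hatXL, colIdx_zero]

theorem hatXN_apply_zero {d l m : ℕ} (hl : d + 1 ≤ l) (A_N : Matrix (Fin m) (Fin l) ℝ)
    (Q : Matrix (Fin l) (Fin l) ℝ) (lam : Fin l → ℝ) (i : Fin m) :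
    hatXN hl A_N Q lam i 0 = (A_N * hatXL hl Q lam) i 0 / lam ⟨0, by omega⟩ := by
  simp [hatXN, hatD, mul_diagonal, colIdx_zero, div_eq_mul_inv]

/-- for entrywise positive `A_L`, `A_N`, the largest eigenvalue of
`A_L` is positive and has a positive unit eigenvector; for any such choice the
first columns of `X̂_L` and `X̂_N` are entrywise strictly positive. -/
theorem stmt_4 {d l m : ℕ} (hd : 1 ≤ d) (hl : d + 1 ≤ l)
    (A_L : Matrix (Fin l) (Fin l) ℝ) (hsym : A_Lᵀ = A_L)
    (hALpos : ∀ i j, 0 < A_L i j)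
    (A_N : Matrix (Fin m) (Fin l) ℝ) (hANpos : ∀ i j, 0 < A_N i j)
    (μ : ℝ)
    (hμeig : ∃ v : Fin l → ℝ, v ≠ 0 ∧ A_L.mulVec v = μ • v)
    (hμmax : ∀ c : ℝ, (∃ v : Fin l → ℝ, v ≠ 0 ∧ A_L.mulVec v = c • v) → c ≤ μ) :
    0 < μ ∧
    (∃ q₁ : Fin l → ℝ, (∑ i, q₁ i ^ 2 = 1) ∧ A_L.mulVec q₁ = μ • q₁ ∧ ∀ i, 0 < q₁ i) ∧
    ∀ q₁ : Fin l → ℝ, (∑ i, q₁ i ^ 2 = 1) → A_L.mulVec q₁ = μ • q₁ → (∀ i, 0 < q₁ i) →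
      ∀ (Q : Matrix (Fin l) (Fin l) ℝ) (lam : Fin l → ℝ),
        Qᵀ * Q = 1 → (∀ i j : Fin l, i ≤ j → lam j ≤ lam i) →
        A_L = Q * Matrix.diagonal lam * Qᵀ →
        (∀ i, Q i ⟨0, by omega⟩ = q₁ i) →
        lam ⟨l - d, by omega⟩ < 0 →
        (∀ i, 0 < hatXL hl Q lam i 0) ∧ (∀ i, 0 < hatXN hl A_N Q lam i 0) := by
  obtain ⟨hμ, hq⟩ :=
    exists_unit_pos_eigenvector_of_pos (isHermitian_iff_isSymm.mpr hsym) hALpos hμeig hμmax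
  refine ⟨hμ, hq, fun q₁ _ hq₁ hq₁pos Q lam hQ _ hdecomp hQq₁ _ => ?_⟩
  set i₀ : Fin l := ⟨0, by omega⟩
  have hcol : (fun i => Q i i₀) = q₁ := funext hQq₁
  have hlam : lam i₀ = μ := by
    have h := congrFun (mulVec_col_of_eq_mul_diagonal_mul_transpose hQ hdecomp i₀) i₀
    rw [hcol, hq₁] at h
    exact mul_right_cancel₀ (hq₁pos i₀).ne' (by simpa using h.symm)
  have hXL : ∀ i, 0 < hatXL hl Q lam i 0 := fun i => by
    rw [hatXL_apply_zero, hlam, hQq₁]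
    exact mul_pos (Real.sqrt_pos.mpr hμ) (hq₁pos i)
  refine ⟨hXL, fun i => ?_⟩
  have : Nonempty (Fin l) := ⟨i₀⟩
  rw [hatXN_apply_zero, hlam, mul_apply]
  exact div_pos (sum_pos (fun j _ => mul_pos (hANpos i j) (hXL j)) univ_nonempty) hμ
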